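/- arXiv:quant-ph/0403031 — 2 statements merged into one kernel-verified Lean document; each statement's English description precedes it below -/
import Mathlib

section
/- If Ψ = (α* a_κ + β* a_λ) a_κ† a_λ† |0⟩ with κ, λ orthonormal, and φ = α κ + β λ + Σ_i c_i ν_i with ν_i orthonormal to κ and λ, then the annihilation operator a(φ) annihilates Ψ: a(φ) Ψ = 0. -/
/-!
Write `χ = α κ + β l` and `ρ = ∑ i, c i • ν i`, so `φ = χ + ρ` and `Ψ = a(χ) X` with
`X = a†(κ) a†(l) |0⟩`. Then `a(φ) Ψ = a(χ)² X - a(χ) a(ρ) X`, where `a(χ)² = 0` by the CAR, and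
`a(ρ) X = 0` because `ρ ⊥ κ, l` lets `a(ρ)` anticommute past both creators down to the vacuum.
-/

/-- A representation of the canonical anticommutation relations (CAR) over a complex
inner product space `H` of single-particle states, on a complex inner product space `F`
(the Fock space), with creation operators `cre φ` (linear in `φ`), annihilation operators
`ann φ` (antilinear in `φ`), a cyclic vacuum vector `vac` of unit norm, and
`ann φ` adjoint to `cre φ`. -/
structure CARRep (H : Type*) [NormedAddCommGroup H] [InnerProductSpace ℂ H]
    (F : Type*) [NormedAddCommGroup F] [InnerProductSpace ℂ F] where
  cre : H →ₗ[ℂ] F →ₗ[ℂ] F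
  ann : H → F →ₗ[ℂ] F
  ann_add : ∀ φ ψ, ann (φ + ψ) = ann φ + ann ψ
  ann_smul : ∀ (c : ℂ) (φ), ann (c • φ) = (starRingEnd ℂ c) • ann φ
  cre_anticomm : ∀ φ ψ, cre φ ∘ₗ cre ψ + cre ψ ∘ₗ cre φ = 0
  ann_anticomm : ∀ φ ψ, ann φ ∘ₗ ann ψ + ann ψ ∘ₗ ann φ = 0
  mixed_anticomm : ∀ φ ψ, ann φ ∘ₗ cre ψ + cre ψ ∘ₗ ann φ = (inner ℂ φ ψ : ℂ) • LinearMap.id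
  vac : F
  vac_norm : ‖vac‖ = 1
  ann_vac : ∀ φ, ann φ vac = 0
  adjoint_rel : ∀ φ x y, (inner ℂ (cre φ x) y : ℂ) = inner ℂ x (ann φ y)

namespace CARRep

variable {H : Type*} [NormedAddCommGroup H] [InnerProductSpace ℂ H]
  {F : Type*} [NormedAddCommGroup F] [InnerProductSpace ℂ F]

/-- The Slater-determinant state `a†(v 1) ⋯ a†(v N) |0⟩`. -/
noncomputable def slater (R : CARRep H F) {N : ℕ} (v : Fin N → H) : F :=
  ((List.ofFn fun i => R.cre (v i)).prod : F →ₗ[ℂ] F) R.vac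

end CARRep

namespace CARRep

variable {H : Type*} [NormedAddCommGroup H] [InnerProductSpace ℂ H]
  {F : Type*} [NormedAddCommGroup F] [InnerProductSpace ℂ F] (R : CARRep H F)

theorem ann_add_apply (φ ψ : H) (x : F) : R.ann (φ + ψ) x = R.ann φ x + R.ann ψ x := by
  rw [R.ann_add, LinearMap.add_apply]

theorem ann_ann_apply_comm (φ ψ : H) (x : F) : R.ann φ (R.ann ψ x) = -R.ann ψ (R.ann φ x) :=
  eq_neg_of_add_eq_zero_left (LinearMap.congr_fun (R.ann_anticomm φ ψ) x)

theorem ann_ann_self (φ : H) (x : F) : R.ann φ (R.ann φ x) = 0 := by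
  have h := R.ann_ann_apply_comm φ φ x
  rw [eq_neg_iff_add_eq_zero, ← two_smul ℂ] at h
  exact (smul_eq_zero.mp h).resolve_left two_ne_zero

theorem ann_cre_apply (φ ψ : H) (x : F) :
    R.ann φ (R.cre ψ x) = (inner ℂ φ ψ : ℂ) • x - R.cre ψ (R.ann φ x) :=
  eq_sub_of_add_eq (LinearMap.congr_fun (R.mixed_anticomm φ ψ) x)

theorem ann_cre_apply_of_inner_eq_zero {φ ψ : H} (h : (inner ℂ φ ψ : ℂ) = 0) (x : F) :
    R.ann φ (R.cre ψ x) = -R.cre ψ (R.ann φ x) := by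
  rw [ann_cre_apply, h, zero_smul, zero_sub]

theorem ann_cre_cre_vac_of_inner_eq_zero {ρ κ l : H} (hκ : (inner ℂ ρ κ : ℂ) = 0)
    (hl : (inner ℂ ρ l : ℂ) = 0) : R.ann ρ (R.cre κ (R.cre l R.vac)) = 0 := by
  rw [R.ann_cre_apply_of_inner_eq_zero hκ, R.ann_cre_apply_of_inner_eq_zero hl, R.ann_vac,
    map_zero, neg_zero, map_zero, neg_zero]

end CARRep

theorem inner_sum_smul_left_eq_zero {H : Type*} [NormedAddCommGroup H] [InnerProductSpace ℂ H]
    {ι : Type*} (s : Finset ι) {x : H} (ν : ι → H) (c : ι → ℂ)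
    (h : ∀ i, (inner ℂ x (ν i) : ℂ) = 0) : (inner ℂ (∑ i ∈ s, c i • ν i) x : ℂ) = 0 := by
  rw [inner_eq_zero_symm, inner_sum]
  exact Finset.sum_eq_zero fun i _ => by rw [inner_smul_right, h, mul_zero]

open CARRep in
theorem annihilation_annihilates_matched_state_general {H : Type*} [NormedAddCommGroup H]
    [InnerProductSpace ℂ H] {F : Type*} [NormedAddCommGroup F] [InnerProductSpace ℂ F]
    (R : CARRep H F) (κ l : H) {k : ℕ} (ν : Fin k → H)
    (hκν : ∀ i, (inner ℂ κ (ν i) : ℂ) = 0) (hlν : ∀ i, (inner ℂ l (ν i) : ℂ) = 0)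
    (α β : ℂ) (c : Fin k → ℂ) (φ : H)
    (hφ : φ = α • κ + β • l + ∑ i, c i • ν i)
    (Ψ : F) (hΨ : Ψ = R.ann (α • κ + β • l) (R.cre κ (R.cre l R.vac))) :
    R.ann φ Ψ = 0 := by
  have hρX : R.ann (∑ i, c i • ν i) (R.cre κ (R.cre l R.vac)) = 0 :=
    R.ann_cre_cre_vac_of_inner_eq_zero (inner_sum_smul_left_eq_zero _ ν c hκν)
      (inner_sum_smul_left_eq_zero _ ν c hlν)
  rw [hΨ, hφ, R.ann_add_apply, R.ann_ann_self, R.ann_ann_apply_comm, hρX, map_zero, neg_zero,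
    zero_add]

open CARRep in
/-- Case 2 of the no-single-term lemma: if
`Ψ = (α* a_κ + β* a_l) a_κ† a_l† |0⟩` with `κ, l` orthonormal and
`φ = α κ + β l + ∑ i, c i • ν i` with the `ν i` orthonormal to `κ` and `l`, then
the annihilation operator `a(φ)` annihilates `Ψ`. -/
theorem annihilation_annihilates_matched_state {H : Type*} [NormedAddCommGroup H]
    [InnerProductSpace ℂ H] {F : Type*} [NormedAddCommGroup F] [InnerProductSpace ℂ F]
    (R : CARRep H F) (κ l : H) {k : ℕ} (ν : Fin k → H)
    (hκ : ‖κ‖ = 1) (hl : ‖l‖ = 1) (hκl : (inner ℂ κ l : ℂ) = 0)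
    (hν : Orthonormal ℂ ν)
    (hκν : ∀ i, (inner ℂ κ (ν i) : ℂ) = 0) (hlν : ∀ i, (inner ℂ l (ν i) : ℂ) = 0)
    (α β : ℂ) (c : Fin k → ℂ) (φ : H)
    (hφ : φ = α • κ + β • l + ∑ i, c i • ν i)
    (Ψ : F) (hΨ : Ψ = R.ann (α • κ + β • l) (R.cre κ (R.cre l R.vac))) :
    R.ann φ Ψ = 0 :=
  annihilation_annihilates_matched_state_general R κ l ν hκν hlν α β c φ hφ Ψ hΨ
end

section
/- With the same setup, the unoccupied-outcome projector P_0 = a_κ a_κ† satisfies P_0 Ψ = β · a_{κ⊥}† a_{μ_2}† ⋯ a_{μ_N}† |0⟩, where κ⊥ = β·u − α·w is the unit vector orthogonal to κ in span(u, w). In particular ‖P_0 Ψ‖² = β² = 1 − α², and P_0 Ψ is a single Slater determinant. -/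
/-! Write `Φ` for the Slater determinant of the `μ i` and `κ⊥ = β u - α w`. Since
`u = α κ + β κ⊥`, the state `Ψ = a_u† Φ` splits as `α a_κ† Φ + β a_{κ⊥}† Φ`. The projector
`a_κ a_κ†` kills the first term because `(a_κ†)² = 0`, and fixes the second one because `a_κ`
annihilates `a_{κ⊥}† Φ` (all modes involved are orthogonal to `κ`). Norms follow from
`‖a_φ† x‖ = ‖φ‖ ‖x‖` whenever `a_φ x = 0`, which turns `‖Φ‖ = 1` into an induction on `N`. -/

section Rotation

variable {𝕜 : Type*} [RCLike 𝕜] {E : Type*} [NormedAddCommGroup E] [InnerProductSpace 𝕜 E]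
  {u w : E} (a b : ℝ)

theorem inner_smul_add_smul_smul_sub_smul_eq_zero (hu : ‖u‖ = 1) (hw : ‖w‖ = 1)
    (huw : inner 𝕜 u w = 0) :
    inner 𝕜 ((a : 𝕜) • u + (b : 𝕜) • w) ((b : 𝕜) • u - (a : 𝕜) • w) = 0 := by
  simp only [inner_add_left, inner_sub_right, inner_smul_left, inner_smul_right, huw,
    inner_eq_zero_symm.mp huw, inner_self_eq_one_of_norm_eq_one hu,
    inner_self_eq_one_of_norm_eq_one hw, RCLike.conj_ofReal]
  ring

theorem norm_smul_sub_smul_eq_one (hu : ‖u‖ = 1) (hw : ‖w‖ = 1) (huw : inner 𝕜 u w = 0)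
    (hab : a ^ 2 + b ^ 2 = 1) : ‖(b : 𝕜) • u - (a : 𝕜) • w‖ = 1 := by
  have hsq : ‖(b : 𝕜) • u - (a : 𝕜) • w‖ ^ 2 = 1 := by
    rw [@norm_sub_sq 𝕜, inner_smul_left, inner_smul_right, huw, norm_smul, norm_smul,
      RCLike.norm_ofReal, RCLike.norm_ofReal, hu, hw]
    simp only [mul_zero, map_zero, mul_one, sq_abs]
    linarith
  exact (pow_eq_one_iff_of_nonneg (norm_nonneg _) two_ne_zero).mp hsq

end Rotation

namespace CARRep

variable {H : Type*} [NormedAddCommGroup H] [InnerProductSpace ℂ H]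
  {F : Type*} [NormedAddCommGroup F] [InnerProductSpace ℂ F] (R : CARRep H F)

theorem cre_cre_self (φ : H) (x : F) : R.cre φ (R.cre φ x) = 0 := by
  have h : R.cre φ (R.cre φ x) + R.cre φ (R.cre φ x) = 0 :=
    LinearMap.congr_fun (R.cre_anticomm φ φ) x
  rwa [← two_smul ℂ, smul_eq_zero, or_iff_right two_ne_zero] at h

theorem ann_cre_of_inner_eq_zero {φ ψ : H} (hφψ : inner ℂ φ ψ = 0) {x : F}
    (hx : R.ann φ x = 0) : R.ann φ (R.cre ψ x) = 0 := by
  rw [ann_cre_apply, hφψ, hx, map_zero, zero_smul, sub_zero]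

theorem ann_cre_self_of_ann_eq_zero {φ : H} {x : F} (hx : R.ann φ x = 0) :
    R.ann φ (R.cre φ x) = (inner ℂ φ φ : ℂ) • x := by
  rw [ann_cre_apply, hx, map_zero, sub_zero]

theorem norm_cre_of_ann_eq_zero {φ : H} {x : F} (hx : R.ann φ x = 0) :
    ‖R.cre φ x‖ = ‖φ‖ * ‖x‖ := by
  have hsq : inner ℂ (R.cre φ x) (R.cre φ x) = inner ℂ φ φ * inner ℂ x x := by
    rw [R.adjoint_rel, R.ann_cre_self_of_ann_eq_zero hx, inner_smul_right]
  simp only [inner_self_eq_norm_sq_to_K, ← mul_pow] at hsq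
  exact (pow_left_inj₀ (norm_nonneg _) (by positivity) two_ne_zero).mp (by exact_mod_cast hsq)

theorem slater_succ {N : ℕ} (v : Fin (N + 1) → H) :
    R.slater v = R.cre (v 0) (R.slater (Fin.tail v)) := by
  simp [slater, List.ofFn_succ, Module.End.mul_apply, Fin.tail]

theorem ann_slater_eq_zero {N : ℕ} {φ : H} {v : Fin N → H} (h : ∀ i, inner ℂ φ (v i) = 0) :
    R.ann φ (R.slater v) = 0 := by
  induction N with
  | zero => exact R.ann_vac φ
  | succ N ih =>
    rw [slater_succ]
    exact R.ann_cre_of_inner_eq_zero (h 0) (ih fun i => h i.succ)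

theorem norm_slater {N : ℕ} {v : Fin N → H} (hv : Orthonormal ℂ v) : ‖R.slater v‖ = 1 := by
  induction N with
  | zero => exact R.vac_norm
  | succ N ih =>
    have hann : R.ann (v 0) (R.slater (Fin.tail v)) = 0 :=
      R.ann_slater_eq_zero fun i => hv.2 (Fin.succ_ne_zero i).symm
    rw [slater_succ, R.norm_cre_of_ann_eq_zero hann, hv.1 0, one_mul]
    exact ih (hv.comp Fin.succ (Fin.succ_injective N))

theorem ann_cre_cre_of_eq_smul_add_smul {κ κ' φ : H} {a b : ℂ} (hκ : ‖κ‖ = 1)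
    (hκκ' : inner ℂ κ κ' = 0) (hφ : φ = a • κ + b • κ') {x : F} (hx : R.ann κ x = 0) :
    R.ann κ (R.cre κ (R.cre φ x)) = b • R.cre κ' x := by
  simp only [hφ, map_add, map_smul, LinearMap.add_apply, LinearMap.smul_apply, cre_cre_self,
    smul_zero, zero_add]
  rw [R.ann_cre_self_of_ann_eq_zero (R.ann_cre_of_inner_eq_zero hκκ' hx),
    inner_self_eq_one_of_norm_eq_one hκ, one_smul]

end CARRep

open CARRep in
theorem P0_single_mode_on_slater_general {H : Type*} [NormedAddCommGroup H] [InnerProductSpace ℂ H]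
    {F : Type*} [NormedAddCommGroup F] [InnerProductSpace ℂ F]
    (R : CARRep H F) {N : ℕ} (v : Fin N → H)
    (S : Submodule ℂ H)
    (κ u w : H) (hκn : ‖κ‖ = 1) (hun : ‖u‖ = 1) (hwn : ‖w‖ = 1)
    (hu : u ∈ S) (hw : w ∈ Sᗮ)
    (α β : ℝ) (hβ : 0 ≤ β) (hαβ : α ^ 2 + β ^ 2 = 1)
    (hκ : κ = (α : ℂ) • u + (β : ℂ) • w)
    (κperp : H) (hκperp : κperp = (β : ℂ) • u - (α : ℂ) • w)
    (μ : Fin (N - 1) → H) (hμ : Orthonormal ℂ μ) (hμS : ∀ i, μ i ∈ S)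
    (hμu : ∀ i, (inner ℂ u (μ i) : ℂ) = 0)
    (hwedge : R.cre u (R.slater μ) = R.slater v)
    (P0 : F →ₗ[ℂ] F) (hP0 : P0 = R.ann κ ∘ₗ R.cre κ) :
    P0 (R.slater v) = (β : ℂ) • R.cre κperp (R.slater μ) ∧
    ‖P0 (R.slater v)‖ ^ 2 = β ^ 2 ∧ (β : ℝ) ^ 2 = 1 - α ^ 2 := by
  have huw : inner ℂ u w = 0 := Submodule.inner_right_of_mem_orthogonal hu hw
  have hwμ (i) : inner ℂ w (μ i) = 0 := Submodule.inner_left_of_mem_orthogonal (hμS i) hw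
  have hκμ (i) : inner ℂ κ (μ i) = 0 := by simp [hκ, hμu, hwμ]
  have hκperpμ (i) : inner ℂ κperp (μ i) = 0 := by simp [hκperp, hμu, hwμ]
  have hκκperp : inner ℂ κ κperp = 0 := by
    rw [hκ, hκperp]; exact inner_smul_add_smul_smul_sub_smul_eq_zero α β hun hwn huw
  have hκperpn : ‖κperp‖ = 1 := by
    rw [hκperp]; exact norm_smul_sub_smul_eq_one α β hun hwn huw hαβ
  have hu_eq : u = (α : ℂ) • κ + (β : ℂ) • κperp := by
    have h : (α : ℂ) ^ 2 + (β : ℂ) ^ 2 = 1 := by exact_mod_cast hαβ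
    rw [hκ, hκperp]
    match_scalars
    · linear_combination -h
    · ring
  have hP0Ψ : P0 (R.slater v) = (β : ℂ) • R.cre κperp (R.slater μ) := by
    rw [hP0, LinearMap.comp_apply, ← hwedge]
    exact R.ann_cre_cre_of_eq_smul_add_smul hκn hκκperp hu_eq (R.ann_slater_eq_zero hκμ)
  refine ⟨hP0Ψ, ?_, by linarith⟩
  rw [hP0Ψ, norm_smul, R.norm_cre_of_ann_eq_zero (R.ann_slater_eq_zero hκperpμ), R.norm_slater hμ,
    hκperpn, Complex.norm_real, Real.norm_of_nonneg hβ, mul_one, mul_one]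

open CARRep in
/-- Unoccupied-outcome single-mode measurement: with the same setup as the occupied case,
the projector `P₀ = a_κ a_κ†` maps the Slater determinant `Ψ` to
`β • a_{κ⊥}† a_{μ₂}† ⋯ a_{μ_N}† |0⟩`, where `κ⊥ = β u − α w`; in particular
`‖P₀ Ψ‖² = β² = 1 − α²` and `P₀ Ψ` is again a single Slater determinant. -/
theorem P0_single_mode_on_slater {H : Type*} [NormedAddCommGroup H] [InnerProductSpace ℂ H]
    {F : Type*} [NormedAddCommGroup F] [InnerProductSpace ℂ F]
    (R : CARRep H F) {N : ℕ} (hN : 1 ≤ N) (v : Fin N → H) (hv : Orthonormal ℂ v)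
    (S : Submodule ℂ H) (hS : S = Submodule.span ℂ (Set.range v))
    (κ u w : H) (hκn : ‖κ‖ = 1) (hun : ‖u‖ = 1) (hwn : ‖w‖ = 1)
    (hu : u ∈ S) (hw : w ∈ Sᗮ)
    (α β : ℝ) (hα : 0 ≤ α) (hβ : 0 ≤ β) (hαβ : α ^ 2 + β ^ 2 = 1)
    (hκ : κ = (α : ℂ) • u + (β : ℂ) • w)
    (κperp : H) (hκperp : κperp = (β : ℂ) • u - (α : ℂ) • w)
    (μ : Fin (N - 1) → H) (hμ : Orthonormal ℂ μ) (hμS : ∀ i, μ i ∈ S)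
    (hμu : ∀ i, (inner ℂ u (μ i) : ℂ) = 0)
    (hwedge : R.cre u (R.slater μ) = R.slater v)
    (P0 : F →ₗ[ℂ] F) (hP0 : P0 = R.ann κ ∘ₗ R.cre κ) :
    P0 (R.slater v) = (β : ℂ) • R.cre κperp (R.slater μ) ∧
    ‖P0 (R.slater v)‖ ^ 2 = β ^ 2 ∧ (β : ℝ) ^ 2 = 1 - α ^ 2 :=
  P0_single_mode_on_slater_general R v S κ u w hκn hun hwn hu hw α β hβ hαβ hκ κperp hκperp μ hμ hμS
    hμu hwedge P0 hP0
end
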